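/- Let A be an n×n complex matrix and σ ∈ ℂ with A + σI invertible. Suppose U ∈ ℂ^{n×k}, V ∈ ℂ^{n×(m−k)}, Ŵ ∈ ℂ^{n×(m+1)}, G̃ ∈ ℂ^{(m+1)×m}, EF ∈ ℂ^{n×k} satisfy (A + σI)[U V] = Ŵ G̃ + σ[EF 0], and set U^{(σ)} = U − σ(A + σI)^{-1} EF. Assume further: (i) the base residual r₀ ∈ ℂⁿ satisfies r₀ = ‖r₀‖ Ŵ e_{k+1}; (ii) the initial shifted residual is exactly collinear, r₀^{(σ)} := b − (A + σI)x₀^{(σ)} = β̃₀ r₀; (iii) ỹ ∈ ℂᵐ and β̃ₘ ∈ ℂ satisfy G̃ ỹ + β̃ₘ z = β̃₀‖r₀‖ e_{k+1} for z ∈ ℂ^{m+1}; (iv) rₘ = Ŵ z. Then the shifted approximation xₘ^{(σ)} = x₀^{(σ)} + [U^{(σ)} V] ỹ has exactly collinear residual: b − (A + σI) xₘ^{(σ)} = β̃ₘ rₘ. -/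
import Mathlib


open Matrix

/-- The Euclidean (ℓ²) norm of a complex vector. -/
noncomputable def euclNorm {n : ℕ} (v : Fin n → ℂ) : ℝ :=
  ‖(WithLp.equiv 2 (Fin n → ℂ)).symm v‖

/-- For `X ∈ ℂ^{n×k}` and `Y ∈ ℂ^{n×(m−k)}` (with `k ≤ m`), the block matrix
`[X Y] ∈ ℂ^{n×m}` whose first `k` columns are those of `X` and whose last
`m − k` columns are those of `Y`. -/
def blockCols {n m k : ℕ} (hk : k ≤ m)
    (X : Matrix (Fin n) (Fin k) ℂ) (Y : Matrix (Fin n) (Fin (m - k)) ℂ) :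
    Matrix (Fin n) (Fin m) ℂ :=
  Matrix.of fun i (j : Fin m) =>
    if h : (j : ℕ) < k then X i ⟨j, h⟩
    else Y i ⟨(j : ℕ) - k, by omega⟩

lemma blockCols_mul_left {n m k : ℕ} (hk : k ≤ m)
    (M : Matrix (Fin n) (Fin n) ℂ)
    (X : Matrix (Fin n) (Fin k) ℂ) (Y : Matrix (Fin n) (Fin (m - k)) ℂ) :
    M * blockCols hk X Y = blockCols hk (M * X) (M * Y) := by
  ext i j
  by_cases h : (j : ℕ) < k <;>
    simp [blockCols, Matrix.mul_apply, h, Finset.mul_sum]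

lemma blockCols_sub {n m k : ℕ} (hk : k ≤ m)
    (X X' : Matrix (Fin n) (Fin k) ℂ) (Y : Matrix (Fin n) (Fin (m - k)) ℂ) :
    blockCols hk (X - X') Y = blockCols hk X Y - blockCols hk X' 0 := by
  ext i j
  by_cases h : (j : ℕ) < k <;> simp [blockCols, h]

lemma blockCols_smul {n m k : ℕ} (hk : k ≤ m) (σ : ℂ)
    (X : Matrix (Fin n) (Fin k) ℂ) :
    blockCols hk (σ • X) (0 : Matrix (Fin n) (Fin (m - k)) ℂ)
      = σ • blockCols hk X 0 := by
  ext i j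
  by_cases h : (j : ℕ) < k <;> simp [blockCols, h]

/-- Under the perturbed Arnoldi-like relation `(A + σI)[U V] = Ŵ G̃ + σ[EF 0]`
with `A + σI` invertible, setting `U^{(σ)} = U − σ(A + σI)⁻¹ EF`, if the initial
shifted residual is exactly collinear (`r₀^{(σ)} = β̃₀ r₀` with
`r₀ = ‖r₀‖ Ŵ e_{k+1}`) and `(ỹ, β̃ₘ)` solves `G̃ ỹ + β̃ₘ z = β̃₀‖r₀‖ e_{k+1}` with
`rₘ = Ŵ z`, then the shifted approximation `xₘ^{(σ)} = x₀^{(σ)} + [U^{(σ)} V] ỹ`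
has exactly collinear residual: `b − (A + σI) xₘ^{(σ)} = β̃ₘ rₘ`. -/
theorem exact_collinearity_over_shifted_augmented_subspace
    {n m k : ℕ} (hk : k ≤ m)
    (A : Matrix (Fin n) (Fin n) ℂ) (σ : ℂ)
    (hinv : IsUnit (A + σ • (1 : Matrix (Fin n) (Fin n) ℂ)))
    (U : Matrix (Fin n) (Fin k) ℂ)
    (V : Matrix (Fin n) (Fin (m - k)) ℂ)
    (W : Matrix (Fin n) (Fin (m + 1)) ℂ)      -- Ŵ
    (G : Matrix (Fin (m + 1)) (Fin m) ℂ)      -- G̃^{(σ)}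
    (EF : Matrix (Fin n) (Fin k) ℂ)
    -- perturbed Arnoldi-like relation
    (hArnoldi : (A + σ • (1 : Matrix (Fin n) (Fin n) ℂ)) * blockCols hk U V
      = W * G + σ • blockCols hk EF (0 : Matrix (Fin n) (Fin (m - k)) ℂ))
    (Uσ : Matrix (Fin n) (Fin k) ℂ)
    (hUσ : Uσ = U - σ • ((A + σ • (1 : Matrix (Fin n) (Fin n) ℂ))⁻¹ * EF))
    (b x0σ r0 r0σ rm : Fin n → ℂ)
    (β0 βm : ℂ) (y : Fin m → ℂ) (z : Fin (m + 1) → ℂ)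
    -- (i) r₀ = ‖r₀‖ Ŵ e_{k+1}
    (hr0 : r0 = (euclNorm r0 : ℂ) •
      W.mulVec (Pi.single (⟨k, Nat.lt_succ_of_le hk⟩ : Fin (m + 1)) (1 : ℂ)))
    -- (ii) exactly collinear initial shifted residual
    (hr0σ : r0σ = b - (A + σ • (1 : Matrix (Fin n) (Fin n) ℂ)).mulVec x0σ)
    (hcollin : r0σ = β0 • r0)
    -- (iii) the (approximate) collinearity system
    (hsys : G.mulVec y + βm • z
      = (β0 * (euclNorm r0 : ℂ)) •
        ((Pi.single (⟨k, Nat.lt_succ_of_le hk⟩ : Fin (m + 1)) (1 : ℂ)) :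
          Fin (m + 1) → ℂ))
    -- (iv) final base residual
    (hrm : rm = W.mulVec z) :
    b - (A + σ • (1 : Matrix (Fin n) (Fin n) ℂ)).mulVec
        (x0σ + (blockCols hk Uσ V).mulVec y)
      = βm • rm := by
  set M := A + σ • (1 : Matrix (Fin n) (Fin n) ℂ) with hM
  have hMinv : M * (M⁻¹ * EF) = EF := by
    rw [← Matrix.mul_assoc, Matrix.mul_nonsing_inv _
      ((Matrix.isUnit_iff_isUnit_det _).mp hinv), Matrix.one_mul]
  have key : M * blockCols hk Uσ V = W * G := by
    rw [hUσ, blockCols_sub, Matrix.mul_sub, hArnoldi, blockCols_smul,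
      Matrix.mul_smul, blockCols_mul_left, hMinv, Matrix.mul_zero]
    abel
  have hGy : G.mulVec y = (β0 * (euclNorm r0 : ℂ)) •
      ((Pi.single (⟨k, Nat.lt_succ_of_le hk⟩ : Fin (m + 1)) (1 : ℂ)) :
        Fin (m + 1) → ℂ) - βm • z := by
    rw [← hsys]; abel
  have : b - M.mulVec (x0σ + (blockCols hk Uσ V).mulVec y)
      = r0σ - (M * blockCols hk Uσ V).mulVec y := by
    rw [hr0σ, Matrix.mulVec_add, ← Matrix.mulVec_mulVec]; abel
  set nr := euclNorm r0 with hnr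
  rw [this, key, ← Matrix.mulVec_mulVec, hGy, hcollin, hr0,
    Matrix.mulVec_sub, Matrix.mulVec_smul, Matrix.mulVec_smul, hrm,
    smul_smul]
  abel
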